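/- Let n ≥ 2. There exists a constant c_n > 0 depending only on n such that for every r > 0 and every Lebesgue measurable set S ⊆ {y ∈ ℝ^n : r/2 < |y| ≤ r} with |S| ≥ ½·|{y ∈ ℝ^n : r/2 < |y| ≤ r}|, one has ∫_S y₁²/|y|^{n+2} dy ≥ c_n, where y₁ denotes the first coordinate of y and |·| denotes Lebesgue measure. -/

import Mathlib

/-!
The annulus `A_r = {r/2 < ‖y‖ ≤ r}` has volume `κ rⁿ`, while its part in the slab
`{|y₁| ≤ ε r}` lies in a box of volume `ε (2r)ⁿ`. For `ε = κ / 2ⁿ⁺²` the slab takes at most a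
quarter of `A_r`, so `S` keeps volume at least `κ rⁿ / 4` outside it. There
`y₁² / ‖y‖ⁿ⁺² ≥ (ε r)² / rⁿ⁺²`, hence `∫_S y₁² / ‖y‖ⁿ⁺² ≥ ε² κ / 4`.
-/

open MeasureTheory Metric Set

theorem setOf_lt_norm_and_norm_le_eq {E : Type*} [SeminormedAddCommGroup E] (s r : ℝ) :
    {y : E | s < ‖y‖ ∧ ‖y‖ ≤ r} = closedBall 0 r \ closedBall 0 s := by
  ext y
  simp [and_comm]

section Haar

variable {E : Type*} [NormedAddCommGroup E] [NormedSpace ℝ E] [MeasurableSpace E] [BorelSpace E]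
  [FiniteDimensional ℝ E] (μ : Measure E) [μ.IsAddHaarMeasure]

theorem addHaar_real_closedBall_diff_closedBall {s r : ℝ} (hs : 0 ≤ s) (hsr : s ≤ r) :
    μ.real (closedBall 0 r \ closedBall 0 s) =
      (r ^ Module.finrank ℝ E - s ^ Module.finrank ℝ E) * μ.real (ball 0 1) := by
  rw [measureReal_sdiff (closedBall_subset_closedBall hsr) measurableSet_closedBall
    measure_closedBall_lt_top.ne, μ.addHaar_real_closedBall 0 (hs.trans hsr),
    μ.addHaar_real_closedBall 0 hs, sub_mul]

end Haar

theorem integrableOn_div_norm_rpow_of_continuous {E : Type*} [NormedAddCommGroup E]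
    [ProperSpace E] [MeasurableSpace E] [OpensMeasurableSpace E] (μ : Measure E)
    [IsFiniteMeasureOnCompacts μ] {g : E → ℝ} (hg : Continuous g) {p s : ℝ} (hp : 0 ≤ p)
    (hs : 0 < s) (r : ℝ) :
    IntegrableOn (fun y => g y / ‖y‖ ^ p) (closedBall 0 r \ ball 0 s) μ := by
  refine ContinuousOn.integrableOn_compact (isCompact_closedBall 0 r |>.diff isOpen_ball) ?_
  refine hg.continuousOn.div (continuous_norm.rpow_const fun _ => Or.inr hp).continuousOn ?_
  intro y hy
  have : s ≤ ‖y‖ := by simpa using hy.2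
  exact (Real.rpow_pos_of_pos (hs.trans_le this) p).ne'

theorem measureReal_le_four_mul_measureReal_diff {α : Type*} [MeasurableSpace α] {μ : Measure α}
    {A S B : Set α} (hSA : S ⊆ A) (hA : μ A ≠ ⊤) (hAS : μ A ≤ 2 * μ S)
    (hAB : 4 * μ.real (A ∩ B) ≤ μ.real A) : μ.real A ≤ 4 * μ.real (S \ B) := by
  have hS : μ S ≠ ⊤ := measure_ne_top_of_subset hSA hA
  have hAS' : μ.real A ≤ 2 * μ.real S := by
    simpa [measureReal_def, ENNReal.toReal_mul] using ENNReal.toReal_mono (by finiteness) hAS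
  have hsplit : μ.real S ≤ μ.real (S \ B) + μ.real (A ∩ B) := by
    calc μ.real S ≤ μ.real ((S \ B) ∪ (A ∩ B)) :=
          measureReal_mono (fun y hy => by by_cases h : y ∈ B <;> simp_all [hSA hy])
            (measure_union_ne_top (measure_ne_top_of_subset sdiff_subset hS)
              (measure_ne_top_of_subset inter_subset_left hA))
      _ ≤ _ := measureReal_union_le _ _
  linarith

theorem EuclideanSpace.volume_real_abs_apply_le_inter_closedBall_le {ι : Type*} [Fintype ι]
    (i : ι) {ε r : ℝ} (hε : 0 ≤ ε) (hr : 0 ≤ r) :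
    volume.real ({y : EuclideanSpace ℝ ι | |y i| ≤ ε * r} ∩ closedBall 0 r) ≤
      ε * (2 * r) ^ Fintype.card ι := by
  classical
  set box : ι → Set ℝ := Function.update (fun _ => Icc (-r) r) i (Icc (-(ε * r)) (ε * r))
  have hsub : {y : EuclideanSpace ℝ ι | |y i| ≤ ε * r} ∩ closedBall 0 r ⊆
      WithLp.ofLp ⁻¹' univ.pi box := by
    rintro y ⟨hyi, hyr⟩ j -
    rcases eq_or_ne j i with rfl | hj
    · simpa [box] using abs_le.1 hyi
    · simpa [box, hj] using
        abs_le.1 ((PiLp.norm_apply_le y j).trans (mem_closedBall_zero_iff.1 hyr))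
  refine ENNReal.toReal_le_of_le_ofReal (by positivity) ?_
  calc _ ≤ volume (WithLp.ofLp ⁻¹' univ.pi box) := measure_mono hsub
    _ = ∏ j, volume (box j) := by
      rw [(PiLp.volume_preserving_ofLp ι).measure_preimage
        (MeasurableSet.univ_pi fun j => by
          rcases eq_or_ne j i with rfl | hj <;> simp [box, *]).nullMeasurableSet, volume_pi_pi]
    _ = ENNReal.ofReal (ε * ((2 * r) ^ (Fintype.card ι - 1) * (2 * r))) := by
      simp only [box, Function.apply_update (fun _ : ι => (volume : Measure ℝ))]
      rw [Finset.prod_update_of_mem (Finset.mem_univ i)]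
      simp only [Real.volume_Icc, sub_neg_eq_add, ← two_mul, Finset.prod_const,
        Finset.card_sdiff, Finset.card_univ, Finset.inter_univ, Finset.card_singleton]
      rw [← ENNReal.ofReal_pow (by positivity), ← ENNReal.ofReal_mul (by positivity)]
      ring_nf
    _ = _ := by rw [pow_sub_one_mul (Fintype.card_pos_iff.2 ⟨i⟩).ne']

theorem sq_div_rpow_le_sq_div_rpow {a t s r p : ℝ} (ht : 0 ≤ t) (hta : t ≤ |a|) (hs : 0 < s)
    (hsr : s ≤ r) (hp : 0 ≤ p) : t ^ 2 / r ^ p ≤ a ^ 2 / s ^ p :=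
  div_le_div₀ (sq_nonneg a) (sq_le_sq.2 (by rwa [abs_of_nonneg ht])) (Real.rpow_pos_of_pos hs p)
    (Real.rpow_le_rpow hs.le hsr hp)

theorem mul_measureReal_le_setIntegral_of_subset {α : Type*} [MeasurableSpace α] {μ : Measure α}
    {f : α → ℝ} {S T : Set α} {m : ℝ} (hTS : T ⊆ S) (hT : MeasurableSet T)
    (hmf : ∀ y ∈ T, m ≤ f y) (hf : ∀ y, 0 ≤ f y) (hfS : IntegrableOn f S μ) :
    m * μ.real T ≤ ∫ y in S, f y ∂μ := by
  by_cases hTμ : μ T = ⊤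
  · simpa [measureReal_def, hTμ] using integral_nonneg hf
  exact (setIntegral_ge_of_const_le_real hT hTμ hmf (hfS.mono_set hTS)).trans
    (setIntegral_mono_set hfS (.of_forall hf) hTS.eventuallyLE)

noncomputable def unitAnnulusVolume (n : ℕ) : ℝ :=
  (1 - (1 / 2) ^ n) * volume.real (ball (0 : EuclideanSpace ℝ (Fin n)) 1)

theorem unitAnnulusVolume_pos {n : ℕ} (hn : n ≠ 0) : 0 < unitAnnulusVolume n :=
  mul_pos (sub_pos.2 (pow_lt_one₀ (by norm_num) (by norm_num) hn))
    (ENNReal.toReal_pos (measure_ball_pos _ _ one_pos).ne' measure_ball_lt_top.ne)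

theorem volume_real_annulus {n : ℕ} {r : ℝ} (hr : 0 < r) :
    volume.real (closedBall (0 : EuclideanSpace ℝ (Fin n)) r \ closedBall 0 (r / 2)) =
      unitAnnulusVolume n * r ^ n := by
  rw [addHaar_real_closedBall_diff_closedBall _ (by positivity) (by linarith),
    finrank_euclideanSpace_fin, unitAnnulusVolume]
  ring

theorem le_four_mul_volume_real_diff_slab {n : ℕ} (i : Fin n) {r : ℝ} (hr : 0 < r)
    {S : Set (EuclideanSpace ℝ (Fin n))} (hSA : S ⊆ closedBall 0 r \ closedBall 0 (r / 2))
    (hAS : volume (closedBall (0 : EuclideanSpace ℝ (Fin n)) r \ closedBall 0 (r / 2)) ≤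
      2 * volume S) :
    unitAnnulusVolume n * r ^ n ≤
      4 * volume.real (S \ {y | |y i| ≤ unitAnnulusVolume n / 2 ^ (n + 2) * r}) := by
  set κ := unitAnnulusVolume n
  set ε := κ / 2 ^ (n + 2)
  set A := closedBall (0 : EuclideanSpace ℝ (Fin n)) r \ closedBall 0 (r / 2)
  set B := {y : EuclideanSpace ℝ (Fin n) | |y i| ≤ ε * r}
  have hκ : 0 < κ := unitAnnulusVolume_pos (Fin.pos i).ne'
  have hvolA : volume.real A = κ * r ^ n := volume_real_annulus hr
  rw [← hvolA]
  refine measureReal_le_four_mul_measureReal_diff hSA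
    (measure_ne_top_of_subset sdiff_subset measure_closedBall_lt_top.ne) hAS ?_
  calc 4 * volume.real (A ∩ B) ≤ 4 * volume.real (B ∩ closedBall 0 r) := by
        gcongr 4 * ?_
        exact measureReal_mono (fun y hy => ⟨hy.2, hy.1.1⟩)
          (measure_ne_top_of_subset inter_subset_right measure_closedBall_lt_top.ne)
    _ ≤ 4 * (ε * (2 * r) ^ n) := by
        gcongr
        simpa using EuclideanSpace.volume_real_abs_apply_le_inter_closedBall_le i
          (by positivity : 0 ≤ ε) hr.le
    _ = volume.real A := by
        rw [hvolA, mul_pow]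
        simp only [ε, pow_add]
        field_simp
        ring

/-- a measurable subset `S` covering at least half of the ring
`{r/2 < |y| ≤ r}` carries at least a fixed (dimensional) amount of the integral of
`y₁²/|y|^{n+2}`. -/
theorem stmt5 (n : ℕ) (hn : 2 ≤ n) :
    ∃ c : ℝ, 0 < c ∧
      ∀ r : ℝ, 0 < r →
      ∀ S : Set (EuclideanSpace ℝ (Fin n)), MeasurableSet S →
      S ⊆ {y : EuclideanSpace ℝ (Fin n) | r / 2 < ‖y‖ ∧ ‖y‖ ≤ r} →
      volume {y : EuclideanSpace ℝ (Fin n) | r / 2 < ‖y‖ ∧ ‖y‖ ≤ r} ≤ 2 * volume S →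
      c ≤ ∫ y in S, (y (⟨0, by omega⟩ : Fin n)) ^ 2 / ‖y‖ ^ ((n : ℝ) + 2) := by
  set i : Fin n := ⟨0, by omega⟩
  set κ := unitAnnulusVolume n
  set ε := κ / 2 ^ (n + 2)
  have hκ : 0 < κ := unitAnnulusVolume_pos (by omega)
  refine ⟨ε ^ 2 * κ / 4, by positivity, fun r hr S hS hSA hAS => ?_⟩
  rw [setOf_lt_norm_and_norm_le_eq] at hSA hAS
  set B := {y : EuclideanSpace ℝ (Fin n) | |y i| ≤ ε * r}
  have hvolT : κ * r ^ n ≤ 4 * volume.real (S \ B) := le_four_mul_volume_real_diff_slab i hr hSA hAS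
  have hB : MeasurableSet B :=
    measurableSet_le (PiLp.continuous_apply 2 _ i).measurable.abs measurable_const
  have hlower : ∀ y ∈ S \ B, (ε * r) ^ 2 / r ^ ((n : ℝ) + 2) ≤ y i ^ 2 / ‖y‖ ^ ((n : ℝ) + 2) := by
    rintro y ⟨hyS, hyB⟩
    obtain ⟨hyr, hyr'⟩ := hSA hyS
    exact sq_div_rpow_le_sq_div_rpow (by positivity) (not_le.1 hyB).le
      (by simp at hyr'; linarith) (mem_closedBall_zero_iff.1 hyr) (by positivity)
  have hint : IntegrableOn (fun y : EuclideanSpace ℝ (Fin n) => y i ^ 2 / ‖y‖ ^ ((n : ℝ) + 2)) S :=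
    (integrableOn_div_norm_rpow_of_continuous volume ((PiLp.continuous_apply 2 _ i).pow 2)
      (by positivity) (half_pos hr) r).mono_set
      (hSA.trans (sdiff_subset_sdiff_right ball_subset_closedBall))
  calc ε ^ 2 * κ / 4 = (ε * r) ^ 2 / r ^ ((n : ℝ) + 2) * (κ * r ^ n / 4) := by
        rw [Real.rpow_add hr, Real.rpow_natCast, Real.rpow_two]; field_simp
    _ ≤ (ε * r) ^ 2 / r ^ ((n : ℝ) + 2) * volume.real (S \ B) := by gcongr; linarith
    _ ≤ _ := mul_measureReal_le_setIntegral_of_subset sdiff_subset (hS.diff hB) hlower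
        (fun y => by positivity) hint
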